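/- arXiv:2509.04234 — 6 statements merged into one kernel-verified Lean document; each statement's English description precedes it below -/
import Mathlib

section
/- Let m, n, l be natural numbers with l ≥ 1, set N = m + n − l, and let 1 ≤ d ≤ n. Suppose γ is an N-excluded Brauer representation triple at depth d for the pair (m,n) which is an ancestor at depth d of some Brauer representation triple g for the pair (m,n) with ht(g) ≤ N. Then the excess Δ = ht(γ) − N satisfies Δ ≤ min(d, l−d). -/
/-- A Brauer representation triple for the pair `(m, n)`: a natural number
`k ≤ min m n`, a partition `γ₊` of `m - k` and a partition `γ₋` of `n - k`. -/
structure BRT (m n : ℕ) where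
  k : ℕ
  k_le : k ≤ min m n
  gp : Nat.Partition (m - k)
  gm : Nat.Partition (n - k)

namespace BRT

/-- The height of a Brauer representation triple: the total number of parts of the
two partitions (the sum of the first-column lengths of the Young diagrams). -/
def ht {m n : ℕ} (γ : BRT m n) : ℕ :=
  Multiset.card γ.gp.parts + Multiset.card γ.gm.parts

end BRT

/-- `AddBox lam mu` : the multiset of parts `mu` is obtained from the multiset of parts
`lam` by adding one box to the Young diagram (either as a new part equal to `1`, or by
increasing one existing part by `1`). -/
def AddBox (lam mu : Multiset ℕ) : Prop :=
  mu = 1 ::ₘ lam ∨ ∃ a ∈ lam, mu = (a + 1) ::ₘ lam.erase a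

/-- `γ'` (a triple at depth `d+1`) is a parent of `γ` (a triple at depth `d`):
either (a) `k' = k`, `γ₊' = γ₊` and `γ₋` is obtained from `γ₋'` by adding one box, or
(b) `k' = k - 1`, `γ₋' = γ₋` and `γ₊'` is obtained from `γ₊` by adding one box. -/
def IsParent {m n₁ n₂ : ℕ} (γ : BRT m n₁) (γ' : BRT m n₂) : Prop :=
  (γ'.k = γ.k ∧ γ'.gp.parts = γ.gp.parts ∧ AddBox γ'.gm.parts γ.gm.parts)
  ∨ (γ'.k = γ.k - 1 ∧ γ'.gm.parts = γ.gm.parts ∧ AddBox γ.gp.parts γ'.gp.parts)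

/-- `IsAncestor m n d d' γ γ'` : the triple `γ'` at depth `d'` for the pair `(m,n)` is an
ancestor of the triple `γ` at depth `d`, i.e. `γ'` is reachable from `γ` by iterating
the parent relation `d' - d` times (one step for each unit increase of depth). -/
inductive IsAncestor (m n : ℕ) : ∀ (d d' : ℕ), BRT m (n - d) → BRT m (n - d') → Prop
  | step {d : ℕ} (γ : BRT m (n - d)) (γ' : BRT m (n - (d + 1))) :
      IsParent γ γ' → IsAncestor m n d (d + 1) γ γ'
  | tail {d d' : ℕ} {γ : BRT m (n - d)} {γ' : BRT m (n - d')} (γ'' : BRT m (n - (d' + 1))) :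
      IsAncestor m n d d' γ γ' → IsParent γ' γ'' → IsAncestor m n d (d' + 1) γ γ''

/-- `Zuniv s` : the number of quadruples `(Δ, k, λ₁, λ₂)` with `Δ ≥ 1`, `k ≥ 0` natural
numbers and `λ₁, λ₂` partitions (of arbitrary natural numbers) such that
`Δ + 2k + |λ₁| + |λ₂| = s`. -/
noncomputable def Zuniv (s : ℕ) : ℕ :=
  Nat.card {q : (ℕ × ℕ) × (Σ a : ℕ, Nat.Partition a) × (Σ a : ℕ, Nat.Partition a) //
    1 ≤ q.1.1 ∧ q.1.1 + 2 * q.1.2 + q.2.1.1 + q.2.2.1 = s}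

/-- `p a` : the number of partitions of `a` (with `p 0 = 1`). -/
def p (a : ℕ) : ℕ := Fintype.card (Nat.Partition a)

/-!
Going up one level to a parent adds at most one part to one of the two partitions, so the
height grows by at most one per step and `ht γ ≤ ht g + d ≤ N + d`. On the other hand a
partition of `a` has at most `a` parts, so every triple for `(m, n - d)` has height at most
`m + n - d = N + (l - d)`.
-/

lemma Nat.Partition.card_parts_le {a : ℕ} (P : Nat.Partition a) : Multiset.card P.parts ≤ a :=
  calc Multiset.card P.parts = (P.parts.map fun _ => 1).sum := by simp
    _ ≤ P.parts.sum := Multiset.sum_map_le_sum _ fun _ hx => P.parts_pos hx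
    _ = a := P.parts_sum

lemma BRT.ht_le {m n : ℕ} (γ : BRT m n) : γ.ht ≤ m + n := by
  have hp := γ.gp.card_parts_le
  have hm := γ.gm.card_parts_le
  unfold BRT.ht
  omega

lemma AddBox.card_le {lam mu : Multiset ℕ} (h : AddBox lam mu) :
    Multiset.card lam ≤ Multiset.card mu := by
  rcases h with rfl | ⟨a, ha, rfl⟩
  · simp
  · rw [Multiset.card_cons, Multiset.card_erase_add_one ha]

lemma AddBox.card_le_add_one {lam mu : Multiset ℕ} (h : AddBox lam mu) :
    Multiset.card mu ≤ Multiset.card lam + 1 := by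
  rcases h with rfl | ⟨a, -, rfl⟩
  · simp
  · simpa using Multiset.card_erase_le

lemma IsParent.ht_le {m n₁ n₂ : ℕ} {γ : BRT m n₁} {γ' : BRT m n₂} (h : IsParent γ γ') :
    γ'.ht ≤ γ.ht + 1 := by
  unfold BRT.ht
  rcases h with ⟨-, hp, hbox⟩ | ⟨-, hm, hbox⟩
  · rw [hp]
    have := hbox.card_le
    omega
  · rw [hm]
    have := hbox.card_le_add_one
    omega

lemma IsAncestor.ht_add_le {m n d d' : ℕ} {γ : BRT m (n - d)} {γ' : BRT m (n - d')}
    (h : IsAncestor m n d d' γ γ') : γ'.ht + d ≤ γ.ht + d' := by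
  induction h with
  | step _ _ hp => have := hp.ht_le; omega
  | tail _ _ hp ih => have := hp.ht_le; omega

theorem stmt3_general (m n l d : ℕ) (hd2 : d ≤ n)
    (γ : BRT m (n - d))
    (g : BRT m (n - 0)) (hg : g.ht ≤ m + n - l)
    (hanc : IsAncestor m n 0 d g γ) :
    γ.ht - (m + n - l) ≤ min d (l - d) := by
  have hstep := hanc.ht_add_le
  have hsize := γ.ht_le
  omega

/-- For `l ≥ 1`, `N = m + n - l` and `1 ≤ d ≤ n`, if `γ` is an `N`-excluded Brauer
representation triple at depth `d` for the pair `(m,n)` which is an ancestor at depth `d`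
of some triple `g` for the pair `(m,n)` with `ht(g) ≤ N`, then the excess
`Δ = ht(γ) - N` satisfies `Δ ≤ min d (l - d)`. -/
theorem stmt3 (m n l d : ℕ) (hl : 1 ≤ l) (hd1 : 1 ≤ d) (hd2 : d ≤ n)
    (γ : BRT m (n - d)) (hred : m + n - l < γ.ht)
    (g : BRT m (n - 0)) (hg : g.ht ≤ m + n - l)
    (hanc : IsAncestor m n 0 d g γ) :
    γ.ht - (m + n - l) ≤ min d (l - d) :=
  stmt3_general m n l d hd2 γ g hg hanc
end

section
/- (Degree-stability of red-node counts.) Let l ≥ 2, let 1 ≤ d ≤ l−1, let Δ ≥ 1, and let m, n, m', n' be natural numbers all ≥ 2l − 3. Then the number of Brauer representation triples for the pair (m, n−d) with height equal to (m + n − l) + Δ is equal to the number of Brauer representation triples for the pair (m', n'−d) with height equal to (m' + n' − l) + Δ. -/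
/-!
Removing the first column of the Young diagrams of `γ₊` and `γ₋` turns a triple `(k, γ₊, γ₋)`
for `(M, N)` of height `M + N - s` into a triple `(k, λ₊, λ₋)` with `2k + |λ₊| + |λ₋| = s`.
Conversely, adding back first columns of heights `M - k - |λ₊|` and `N - k - |λ₋|` is possible
whenever `2s ≤ min M N`, so the count depends only on `s`. For the pair `(m, n - d)` and height
`m + n - l + Δ` one has `s = l - d - Δ`, and `2s ≤ 2l - 4` is within the hypotheses on `m, n`;
if `d + Δ > l` the height exceeds `M + N` and both counts vanish.
-/

namespace Multiset

variable {P : Multiset ℕ}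

theorem sum_map_pred_add_card (hP : ∀ x ∈ P, 0 < x) :
    (P.map (· - 1)).sum + card P = P.sum := by
  induction P using Multiset.induction_on with
  | empty => simp
  | cons a P ih =>
    have ha := hP a (mem_cons_self a P)
    have := ih fun x hx => hP x (mem_cons_of_mem hx)
    simp only [map_cons, sum_cons, card_cons]
    omega

theorem card_filter_map_pred_add_count_one (hP : ∀ x ∈ P, 0 < x) :
    card ((P.map (· - 1)).filter (· ≠ 0)) + P.count 1 = card P := by
  induction P using Multiset.induction_on with
  | empty => simp
  | cons a P ih =>
    have ha := hP a (mem_cons_self a P)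
    have := ih fun x hx => hP x (mem_cons_of_mem hx)
    simp only [map_cons, filter_cons, count_cons, card_cons]
    split_ifs <;> simp only [card_add, card_singleton, card_zero] <;> omega

theorem map_succ_filter_map_pred_add_replicate (hP : ∀ x ∈ P, 0 < x) :
    ((P.map (· - 1)).filter (· ≠ 0)).map (· + 1) + replicate (P.count 1) 1 = P := by
  induction P using Multiset.induction_on with
  | empty => simp
  | cons a P ih =>
    have ha := hP a (mem_cons_self a P)
    have := ih fun x hx => hP x (mem_cons_of_mem hx)
    rcases (by omega : a = 1 ∨ 1 < a) with rfl | ha1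
    · simp [replicate_succ, this]
    · simp only [ne_eq] at this
      simp [show a - 1 ≠ 0 by omega, show 1 ≠ a by omega, Nat.sub_add_cancel ha, this]

theorem filter_map_pred_map_succ_add_replicate {μ : Multiset ℕ} (hμ : ∀ x ∈ μ, 0 < x) (r : ℕ) :
    ((μ.map (· + 1) + replicate r 1).map (· - 1)).filter (· ≠ 0) = μ := by
  simp [map_replicate, filter_add, filter_eq_self.mpr fun x hx => (hμ x hx).ne',
    mem_replicate]

end Multiset

namespace Nat.Partition

open Multiset

theorem sigma_mk_eq_of_parts_eq {a b : ℕ} {P : a.Partition} {Q : b.Partition}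
    (h : P.parts = Q.parts) : (⟨a, P⟩ : Σ n, n.Partition) = ⟨b, Q⟩ := by
  obtain rfl : a = b := by rw [← P.parts_sum, ← Q.parts_sum, h]
  rw [Nat.Partition.ext h]

def firstColumnEquiv (c : ℕ) :
    c.Partition ≃ {L : Σ a, a.Partition // L.1 + card L.2.parts ≤ c} where
  toFun P := ⟨⟨_, ofMultiset (P.parts.map (· - 1))⟩, by
    have hsum := sum_map_pred_add_card fun _ hx => P.parts_pos hx
    have hcard := card_filter_map_pred_add_count_one fun _ hx => P.parts_pos hx
    simp only [ofMultiset_parts, ne_eq, P.parts_sum] at hsum hcard ⊢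
    omega⟩
  invFun L :=
    { parts := L.1.2.parts.map (· + 1) + replicate (c - L.1.1 - card L.1.2.parts) 1
      parts_pos := by
        simp only [mem_add, mem_map, mem_replicate]
        omega
      parts_sum := by
        have := L.2
        simp [sum_map_add, L.1.2.parts_sum]
        omega }
  left_inv P := by
    ext1
    have hsum := sum_map_pred_add_card fun _ hx => P.parts_pos hx
    have hcard := card_filter_map_pred_add_count_one fun _ hx => P.parts_pos hx
    simp only [ofMultiset_parts, ne_eq, P.parts_sum] at hsum hcard ⊢
    refine Eq.trans ?_ (map_succ_filter_map_pred_add_replicate fun _ hx => P.parts_pos hx)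
    congr 2
    omega
  right_inv L := by
    apply Subtype.ext
    exact sigma_mk_eq_of_parts_eq
      (filter_map_pred_map_succ_add_replicate (fun _ hx => L.1.2.parts_pos hx) _)

theorem firstColumnEquiv_fst_add_card {c : ℕ} (P : c.Partition) :
    (firstColumnEquiv c P).1.1 + card P.parts = c := by
  simpa [firstColumnEquiv, P.parts_sum] using sum_map_pred_add_card fun _ hx => P.parts_pos hx

theorem card_firstColumnEquiv_symm {c : ℕ}
    (L : {L : Σ a, a.Partition // L.1 + card L.2.parts ≤ c}) :
    card ((firstColumnEquiv c).symm L).parts = c - L.1.1 := by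
  have := firstColumnEquiv_fst_add_card ((firstColumnEquiv c).symm L)
  rw [Equiv.apply_symm_apply] at this
  omega

theorem card_parts_le_s4 {c : ℕ} (P : c.Partition) : card P.parts ≤ c := by
  have := firstColumnEquiv_fst_add_card P
  omega

end Nat.Partition

def StrippedTriple (s : ℕ) : Type :=
  {q : ℕ × (Σ a, a.Partition) × (Σ a, a.Partition) // 2 * q.1 + q.2.1.1 + q.2.2.1 = s}

namespace BRT

open Nat.Partition

variable {M N : ℕ}

theorem ht_le_s4 (γ : BRT M N) : γ.ht ≤ M + N := by
  have := γ.gp.card_parts_le_s4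
  have := γ.gm.card_parts_le_s4
  unfold ht
  omega

def heightEquiv {h s : ℕ} (hs : h + s = M + N) (hM : 2 * s ≤ M) (hN : 2 * s ≤ N) :
    {γ : BRT M N // γ.ht = h} ≃ StrippedTriple s where
  toFun γ := ⟨(γ.1.k, (firstColumnEquiv _ γ.1.gp).1, (firstColumnEquiv _ γ.1.gm).1), by
    have := firstColumnEquiv_fst_add_card γ.1.gp
    have := firstColumnEquiv_fst_add_card γ.1.gm
    have := γ.1.k_le
    have := γ.2
    unfold ht at this
    dsimp only
    omega⟩
  invFun q :=
    have := q.2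
    have := q.1.2.1.2.card_parts_le_s4
    have := q.1.2.2.2.card_parts_le_s4
    ⟨⟨q.1.1, by omega, (firstColumnEquiv _).symm ⟨q.1.2.1, by omega⟩,
      (firstColumnEquiv _).symm ⟨q.1.2.2, by omega⟩⟩, by
      simp only [ht, card_firstColumnEquiv_symm]
      omega⟩
  left_inv γ := by
    obtain ⟨⟨k, hk, gp, gm⟩, hγ⟩ := γ
    simp
  right_inv q := Subtype.ext (by simp)

theorem card_ht_eq_zero_of_lt {h : ℕ} (hh : M + N < h) : Nat.card {γ : BRT M N // γ.ht = h} = 0 :=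
  have : IsEmpty {γ : BRT M N // γ.ht = h} := ⟨fun γ => by have := γ.1.ht_le_s4; omega⟩
  Nat.card_of_isEmpty

end BRT

theorem stmt4_general (l d Δ m n m' n' : ℕ) (hd1 : 1 ≤ d) (hd2 : d ≤ l - 1)
    (hΔ : 1 ≤ Δ) (hm : 2 * l - 3 ≤ m) (hn : 2 * l - 3 ≤ n)
    (hm' : 2 * l - 3 ≤ m') (hn' : 2 * l - 3 ≤ n') :
    Nat.card {γ : BRT m (n - d) // γ.ht = (m + n - l) + Δ}
      = Nat.card {γ : BRT m' (n' - d) // γ.ht = (m' + n' - l) + Δ} := by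
  by_cases hΔl : d + Δ ≤ l
  · rw [Nat.card_congr (BRT.heightEquiv (s := l - d - Δ) (by omega) (by omega) (by omega)),
      Nat.card_congr (BRT.heightEquiv (s := l - d - Δ) (by omega) (by omega) (by omega))]
  · rw [BRT.card_ht_eq_zero_of_lt (by omega), BRT.card_ht_eq_zero_of_lt (by omega)]

/-- Degree-stability of red-node counts: for `l ≥ 2`, `1 ≤ d ≤ l - 1`, `Δ ≥ 1` and
`m, n, m', n'` all at least `2l - 3`, the number of Brauer representation triples for the
pair `(m, n - d)` of height `(m + n - l) + Δ` equals the number of triples for the pair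
`(m', n' - d)` of height `(m' + n' - l) + Δ`. -/
theorem stmt4 (l d Δ m n m' n' : ℕ) (hl : 2 ≤ l) (hd1 : 1 ≤ d) (hd2 : d ≤ l - 1)
    (hΔ : 1 ≤ Δ) (hm : 2 * l - 3 ≤ m) (hn : 2 * l - 3 ≤ n)
    (hm' : 2 * l - 3 ≤ m') (hn' : 2 * l - 3 ≤ n') :
    Nat.card {γ : BRT m (n - d) // γ.ht = (m + n - l) + Δ}
      = Nat.card {γ : BRT m' (n' - d) // γ.ht = (m' + n' - l) + Δ} :=
  stmt4_general l d Δ m n m' n' hd1 hd2 hΔ hm hn hm' hn'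
end

section
/- Let l ≥ 2, let 1 ≤ d ≤ l − 1, let m, n ≥ 2l − 3, and set N = m + n − l. Define R(l,d) to be the number of Brauer representation triples γ for the pair (m, n−d) satisfying N < ht(γ) ≤ N + min(l−d, d). Then R(l,d) = Σ_{k=0}^{⌊(l−d)/2⌋} Σ_{Δ=1}^{min(l−d−2k, d)} Σ_{a=0}^{l−d−2k−Δ} p(a)·p(l−d−2k−Δ−a). -/
/-!
Write the two partitions of a triple at level `k` as partitions of `m - k` and `n - d - k`
with `a` and `b` parts fewer than their sizes. Then `ht γ - N = l - d - 2k - a - b =: Δ`, so the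
triples counted are those with `1 ≤ Δ ≤ min (l - d - 2k) d`. Deleting the first column of the
Young diagram identifies the partitions of `s` with `s - a` parts with the partitions of `a`
as soon as `2a ≤ s`, and the bounds on `m` and `n` make this hold for every `a` and `b` that
occur; hence each `(k, Δ, a)` contributes `p a * p (l - d - 2k - Δ - a)`.
-/

open Finset

namespace Multiset

theorem filter_ne_zero_add_replicate (M : Multiset ℕ) :
    M.filter (· ≠ 0) + replicate (card M - card (M.filter (· ≠ 0))) 0 = M := by
  have hzeros : M.filter (fun x => ¬ x ≠ 0) = replicate (count 0 M) 0 := by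
    simpa only [not_not] using filter_eq' M 0
  have hsplit := filter_add_not (· ≠ 0) M
  rw [hzeros] at hsplit
  have hcard := congrArg card hsplit
  rw [card_add, card_replicate] at hcard
  rw [show card M - card (M.filter (· ≠ 0)) = count 0 M by omega, hsplit]

theorem sum_map_sub_one_add_card {M : Multiset ℕ} (h : ∀ x ∈ M, 1 ≤ x) :
    (M.map (· - 1)).sum + card M = M.sum := by
  induction M using Multiset.induction_on with
  | empty => simp
  | cons a M ih =>
    simp only [forall_mem_cons] at h
    simp only [map_cons, sum_cons, card_cons]
    have := ih h.2
    omega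

end Multiset

namespace Nat.Partition

theorem card_parts_le_s6 {n : ℕ} (q : n.Partition) : Multiset.card q.parts ≤ n := by
  simpa [q.parts_sum] using Multiset.card_nsmul_le_sum (a := 1) fun _ hx => q.parts_pos hx

/-- Deleting the first column of the Young diagram; the inverse pads with zero parts up to
`r` parts and adds a box to each. -/
def cardPartsEqEquiv (a r : ℕ) :
    {q : (a + r).Partition // Multiset.card q.parts = r} ≃
      {q : a.Partition // Multiset.card q.parts ≤ r} where
  toFun q := by
    refine ⟨⟨(q.1.parts.map (· - 1)).filter (· ≠ 0), fun hi => ?_, ?_⟩, ?_⟩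
    · exact Nat.pos_of_ne_zero (Multiset.mem_filter.mp hi).2
    · have hshift := Multiset.sum_map_sub_one_add_card fun _ hx => q.1.parts_pos hx
      have hpad := congrArg Multiset.sum
        (Multiset.filter_ne_zero_add_replicate (q.1.parts.map (· - 1)))
      simp only [Multiset.sum_add, Multiset.sum_replicate, smul_zero, add_zero] at hpad
      rw [hpad]
      have := q.1.parts_sum
      have := q.2
      omega
    · exact (Multiset.card_le_card (Multiset.filter_le _ _)).trans (by simp [q.2])
  invFun q := by
    refine ⟨⟨(q.1.parts + Multiset.replicate (r - Multiset.card q.1.parts) 0).map (· + 1),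
      fun hi => ?_, ?_⟩, ?_⟩
    · obtain ⟨_, _, rfl⟩ := Multiset.mem_map.mp hi
      omega
    · have := q.2
      simp only [Multiset.map_add, Multiset.map_replicate, zero_add, Multiset.sum_add,
        Multiset.sum_map_add, Multiset.map_id', q.1.parts_sum, Multiset.map_const',
        Multiset.sum_replicate, smul_eq_mul, mul_one]
      omega
    · have := q.2
      simp only [Multiset.map_add, Multiset.map_replicate, Multiset.card_add, Multiset.card_map,
        Multiset.card_replicate]
      omega
  left_inv q := by
    refine Subtype.ext (Nat.Partition.ext ?_)
    have hpad := Multiset.filter_ne_zero_add_replicate (q.1.parts.map (· - 1))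
    rw [Multiset.card_map, q.2] at hpad
    dsimp only
    rw [hpad, Multiset.map_map]
    exact (Multiset.map_congr rfl fun x hx => Nat.sub_add_cancel (q.1.parts_pos hx)).trans
      (Multiset.map_id _)
  right_inv q := by
    refine Subtype.ext (Nat.Partition.ext ?_)
    dsimp only
    rw [Multiset.map_map, Function.comp_def]
    simp only [Nat.add_sub_cancel, Multiset.map_id', Multiset.filter_add]
    rw [Multiset.filter_eq_self.mpr fun _ hx => (q.1.parts_pos hx).ne',
      Multiset.filter_eq_nil.mpr fun _ hx => by simp [Multiset.eq_of_mem_replicate hx], add_zero]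

theorem card_filter_card_parts_eq {a r s : ℕ} (hs : a + r = s) (har : a ≤ r) :
    #{q : s.Partition | Multiset.card q.parts = r} = Fintype.card a.Partition := by
  subst hs
  rw [← Fintype.card_subtype, Fintype.card_congr (cardPartsEqEquiv a r)]
  exact Fintype.card_congr (Equiv.subtypeUnivEquiv fun q => q.card_parts_le_s6.trans har)

end Nat.Partition

open Nat.Partition in
theorem card_partition_pairs_card_parts_eq {s t a b : ℕ} (ha : 2 * a ≤ s) (hb : 2 * b ≤ t) :
    #{c : s.Partition × t.Partition |
        Multiset.card c.1.parts = s - a ∧ Multiset.card c.2.parts = t - b} = p a * p b := by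
  rw [← univ_product_univ, filter_product (fun q : s.Partition => Multiset.card q.parts = s - a)
    (fun q : t.Partition => Multiset.card q.parts = t - b), card_product,
    card_filter_card_parts_eq (a := a) (by omega) (by omega),
    card_filter_card_parts_eq (a := b) (by omega) (by omega)]
  rfl

theorem card_partition_pairs_height {s t L D : ℕ} (hs : 2 * L ≤ s + 2) (ht : 2 * L ≤ t + 2) :
    #{c : s.Partition × t.Partition |
        s + t < Multiset.card c.1.parts + Multiset.card c.2.parts + L ∧
          Multiset.card c.1.parts + Multiset.card c.2.parts + L ≤ s + t + D} =
      ∑ Δ ∈ Icc 1 (min L D), ∑ a ∈ range (L - Δ + 1), p a * p (L - Δ - a) := by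
  have hle (c : s.Partition × t.Partition) := And.intro c.1.card_parts_le_s6 c.2.card_parts_le_s6
  rw [card_eq_sum_card_fiberwise (t := (Icc 1 (min L D)).sigma fun Δ => range (L - Δ + 1))
    (f := fun c => ⟨Multiset.card c.1.parts + Multiset.card c.2.parts + L - (s + t),
      s - Multiset.card c.1.parts⟩), sum_sigma]
  · refine sum_congr rfl fun Δ hΔ => sum_congr rfl fun a ha => ?_
    rw [mem_Icc] at hΔ
    rw [mem_range] at ha
    rw [filter_filter, ← card_partition_pairs_card_parts_eq (s := s) (t := t) (a := a)
      (b := L - Δ - a) (by omega) (by omega)]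
    refine congrArg card (filter_congr fun c _ => ?_)
    have := hle c
    simp only [Sigma.mk.inj_iff, heq_eq_eq]
    omega
  · intro c hc
    have := hle c
    simp only [coe_filter, mem_univ, true_and, Set.mem_ofPred_eq] at hc
    simp only [coe_sigma, Set.mem_sigma_iff, coe_Icc, Set.mem_Icc, coe_range, Set.mem_Iio]
    omega

namespace BRT

def equivSigma (m n : ℕ) (P : ℕ → Prop) :
    {γ : BRT m n // P γ.ht} ≃ Σ k : Fin (min m n + 1),
      {c : (m - k).Partition × (n - k).Partition //
        P (Multiset.card c.1.parts + Multiset.card c.2.parts)} where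
  toFun γ := ⟨⟨γ.1.k, Nat.lt_succ_of_le γ.1.k_le⟩, (γ.1.gp, γ.1.gm), γ.2⟩
  invFun c := ⟨⟨c.1, Nat.le_of_lt_succ c.1.2, c.2.1.1, c.2.1.2⟩, c.2.2⟩
  left_inv _ := rfl
  right_inv _ := rfl

theorem card_subtype_ht (m n : ℕ) (P : ℕ → Prop) [DecidablePred P] :
    Nat.card {γ : BRT m n // P γ.ht} =
      ∑ k ∈ range (min m n + 1), #{c : (m - k).Partition × (n - k).Partition |
        P (Multiset.card c.1.parts + Multiset.card c.2.parts)} := by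
  rw [Nat.card_congr (equivSigma m n P), Nat.card_sigma,
    ← Fin.sum_univ_eq_sum_range (fun k => #{c : (m - k).Partition × (n - k).Partition |
        P (Multiset.card c.1.parts + Multiset.card c.2.parts)})]
  simp only [Nat.card_eq_fintype_card, Fintype.card_subtype]

end BRT

theorem stmt6_general (l d m n : ℕ) (hd1 : 1 ≤ d)
    (hm : 2 * l - 3 ≤ m) (hn : 2 * l - 3 ≤ n) :
    Nat.card {γ : BRT m (n - d) //
        m + n - l < γ.ht ∧ γ.ht ≤ (m + n - l) + min (l - d) d}
      = ∑ k ∈ Finset.range ((l - d) / 2 + 1),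
          ∑ Δ ∈ Finset.Icc 1 (min (l - d - 2 * k) d),
            ∑ a ∈ Finset.range (l - d - 2 * k - Δ + 1),
              p a * p (l - d - 2 * k - Δ - a) := by
  rw [BRT.card_subtype_ht m (n - d) (fun h => m + n - l < h ∧ h ≤ m + n - l + min (l - d) d)]
  calc _ = ∑ k ∈ range (min m (n - d) + 1), ∑ Δ ∈ Icc 1 (min (l - d - 2 * k) d),
        ∑ a ∈ range (l - d - 2 * k - Δ + 1), p a * p (l - d - 2 * k - Δ - a) := by
        refine sum_congr rfl fun k hk => ?_
        rw [mem_range] at hk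
        rw [← card_partition_pairs_height (s := m - k) (t := n - d - k) (D := d) (by omega)
          (by omega)]
        refine congrArg card (filter_congr fun c _ => ?_)
        have := c.1.card_parts_le_s6
        have := c.2.card_parts_le_s6
        omega
    _ = _ := by
        refine (sum_subset (fun k hk => ?_) fun k _ hk => ?_).symm
        · simp only [mem_range] at hk ⊢
          omega
        · simp only [mem_range] at hk
          rw [show min (l - d - 2 * k) d = 0 by omega, Icc_eq_empty (by omega), sum_empty]

/-- For `l ≥ 2`, `1 ≤ d ≤ l - 1`, `m, n ≥ 2l - 3` and `N = m + n - l`, the number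
`R(l,d)` of Brauer representation triples `γ` for the pair `(m, n - d)` with
`N < ht(γ) ≤ N + min (l-d) d` equals
`Σ_{k=0}^{⌊(l-d)/2⌋} Σ_{Δ=1}^{min(l-d-2k, d)} Σ_{a=0}^{l-d-2k-Δ} p(a)·p(l-d-2k-Δ-a)`. -/
theorem stmt6 (l d m n : ℕ) (hl : 2 ≤ l) (hd1 : 1 ≤ d) (hd2 : d ≤ l - 1)
    (hm : 2 * l - 3 ≤ m) (hn : 2 * l - 3 ≤ n) :
    Nat.card {γ : BRT m (n - d) //
        m + n - l < γ.ht ∧ γ.ht ≤ (m + n - l) + min (l - d) d}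
      = ∑ k ∈ Finset.range ((l - d) / 2 + 1),
          ∑ Δ ∈ Finset.Icc 1 (min (l - d - 2 * k) d),
            ∑ a ∈ Finset.range (l - d - 2 * k - Δ + 1),
              p a * p (l - d - 2 * k - Δ - a) :=
  stmt6_general l d m n hd1 hm hn
end

section
/- (Existence of the first red ancestor.) Let l ≥ 2, set N = m + n − l, and let γ = (k, γ₊, γ₋) be a Brauer representation triple for the pair (m,n) with ht(γ) ≤ N which possesses an N-excluded ancestor at some depth. Set t = N − ht(γ). Then k ≥ t + 1, and the triple γ̃ = (k − t − 1, γ̃₊, γ₋), where γ̃₊ is γ₊ with t+1 additional parts equal to 1 adjoined, is an N-excluded ancestor of γ at depth t + 1 with ht(γ̃) = N + 1; it is reached from γ by a chain of t+1 parent moves each of which adjoins one part equal to 1 to the first component partition. -/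
/-- A parent move which adjoins one part equal to `1` to the first component partition
(i.e. adds a box to the first column of `γ₊`), decreasing `k` by one and keeping `γ₋`. -/
def IsParentC {m n₁ n₂ : ℕ} (γ : BRT m n₁) (γ' : BRT m n₂) : Prop :=
  γ'.k = γ.k - 1 ∧ γ'.gm.parts = γ.gm.parts ∧ γ'.gp.parts = 1 ::ₘ γ.gp.parts

/-- `IsAncestorC m n d d' γ γ'` : `γ'` is reached from `γ` by a chain of `d' - d` parent
moves each of which adjoins one part equal to `1` to the first component partition. -/
inductive IsAncestorC (m n : ℕ) : ∀ (d d' : ℕ), BRT m (n - d) → BRT m (n - d') → Prop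
  | step {d : ℕ} (γ : BRT m (n - d)) (γ' : BRT m (n - (d + 1))) :
      IsParentC γ γ' → IsAncestorC m n d (d + 1) γ γ'
  | tail {d d' : ℕ} {γ : BRT m (n - d)} {γ' : BRT m (n - d')} (γ'' : BRT m (n - (d' + 1))) :
      IsAncestorC m n d d' γ γ' → IsParentC γ' γ'' → IsAncestorC m n d (d' + 1) γ γ''


/-!
Along a parent move the quantity `ht + k` never increases: a move of type (a) removes a box
from `γ₋` and fixes `k`, while a move of type (b) lowers `k` by one and adds at most one part
to `γ₊`. Hence an `N`-excluded ancestor forces `N < ht(γ) + k`, i.e. `k ≥ t + 1`. Adjoining a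
part `1` to `γ₊` is always a parent move when `k ≥ 1`, and raises the height by exactly one,
so `t + 1` such moves reach height `N + 1`.
-/

namespace AddBox

variable {lam mu : Multiset ℕ}

lemma sum_eq (h : AddBox lam mu) : mu.sum = lam.sum + 1 := by
  rcases h with rfl | ⟨a, ha, rfl⟩
  · simp [add_comm]
  · rw [Multiset.sum_cons, ← Multiset.sum_erase ha]
    ring

lemma card_le_s10 (h : AddBox lam mu) : Multiset.card lam ≤ Multiset.card mu := by
  rcases h with rfl | ⟨a, ha, rfl⟩
  · simp
  · rw [Multiset.card_cons, Multiset.card_erase_add_one ha]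

lemma card_le_card_add_one (h : AddBox lam mu) :
    Multiset.card mu ≤ Multiset.card lam + 1 := by
  rcases h with rfl | ⟨a, ha, rfl⟩
  · simp
  · rw [Multiset.card_cons, Multiset.card_erase_add_one ha]
    omega

end AddBox

lemma IsParent.ht_add_k_le {m n₁ n₂ : ℕ} {γ : BRT m n₁} {γ' : BRT m n₂}
    (h : IsParent γ γ') : γ'.ht + γ'.k ≤ γ.ht + γ.k := by
  rcases h with ⟨hk, hgp, hbox⟩ | ⟨hk, hgm, hbox⟩
  · have := hbox.card_le_s10
    simp only [BRT.ht, hgp, hk]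
    omega
  · have hcard := hbox.card_le_card_add_one
    -- the box count of `γ₊` rises by one, which rules out the truncated case `γ.k = 0`
    have hsum := hbox.sum_eq
    have := γ.gp.parts_sum
    have := γ'.gp.parts_sum
    have := le_min_iff.mp γ.k_le
    simp only [BRT.ht, hgm]
    omega

lemma IsAncestor.ht_add_k_le {m n d d' : ℕ} {γ : BRT m (n - d)} {γ' : BRT m (n - d')}
    (h : IsAncestor m n d d' γ γ') : γ'.ht + γ'.k ≤ γ.ht + γ.k := by
  induction h with
  | step _ _ hp => exact hp.ht_add_k_le
  | tail _ _ hp ih => exact hp.ht_add_k_le.trans ih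

lemma IsParentC.isParent {m n₁ n₂ : ℕ} {γ : BRT m n₁} {γ' : BRT m n₂}
    (h : IsParentC γ γ') : IsParent γ γ' :=
  Or.inr ⟨h.1, h.2.1, Or.inl h.2.2⟩

lemma IsAncestorC.isAncestor {m n d d' : ℕ} {γ : BRT m (n - d)} {γ' : BRT m (n - d')}
    (h : IsAncestorC m n d d' γ γ') : IsAncestor m n d d' γ γ' := by
  induction h with
  | step _ _ hp => exact .step _ _ hp.isParent
  | tail _ _ hp ih => exact .tail _ ih hp.isParent

lemma BRT.exists_isParentC {m n₁ n₂ : ℕ} (γ : BRT m n₁) (hk : 1 ≤ γ.k) (hn : n₂ = n₁ - 1) :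
    ∃ γ' : BRT m n₂, IsParentC γ γ' := by
  have := le_min_iff.mp γ.k_le
  have := γ.gp.parts_sum
  have := γ.gm.parts_sum
  have hpos : ∀ {i}, i ∈ 1 ::ₘ γ.gp.parts → 0 < i := by
    intro i hi
    rcases Multiset.mem_cons.mp hi with rfl | hi
    · exact one_pos
    · exact γ.gp.parts_pos hi
  refine ⟨⟨γ.k - 1, le_min_iff.mpr ⟨by omega, by omega⟩,
    ⟨1 ::ₘ γ.gp.parts, hpos, ?_⟩, ⟨γ.gm.parts, γ.gm.parts_pos, by omega⟩⟩, rfl, rfl, rfl⟩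
  rw [Multiset.sum_cons]
  omega

lemma BRT.exists_isAncestorC_replicate {m n : ℕ} (γ : BRT m (n - 0)) (j : ℕ)
    (hj : j + 1 ≤ γ.k) :
    ∃ γt : BRT m (n - (j + 1)),
      γt.k = γ.k - (j + 1) ∧
      γt.gp.parts = Multiset.replicate (j + 1) 1 + γ.gp.parts ∧
      γt.gm.parts = γ.gm.parts ∧
      IsAncestorC m n 0 (j + 1) γ γt := by
  induction j with
  | zero =>
    obtain ⟨γ', hp⟩ := γ.exists_isParentC (by omega) rfl
    exact ⟨γ', hp.1, by rw [hp.2.2]; rfl, hp.2.1, .step _ _ hp⟩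
  | succ j ih =>
    obtain ⟨γj, hk, hgp, hgm, hanc⟩ := ih (by omega)
    obtain ⟨γ', hp⟩ := γj.exists_isParentC (by omega) (Nat.sub_sub _ _ _).symm
    refine ⟨γ', by rw [hp.1, hk]; omega, ?_, hp.2.1.trans hgm, .tail _ hanc hp⟩
    rw [hp.2.2, hgp, ← Multiset.cons_add, ← Multiset.replicate_succ]

theorem stmt10_general (m n l : ℕ) (γ : BRT m (n - 0))
    (hg : γ.ht ≤ m + n - l)
    (hanc : ∃ d' : ℕ, ∃ γ' : BRT m (n - d'),
      IsAncestor m n 0 d' γ γ' ∧ m + n - l < γ'.ht) :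
    ((m + n - l) - γ.ht) + 1 ≤ γ.k ∧
    ∃ γt : BRT m (n - (((m + n - l) - γ.ht) + 1)),
      γt.k = γ.k - (((m + n - l) - γ.ht) + 1) ∧
      γt.gp.parts = Multiset.replicate (((m + n - l) - γ.ht) + 1) 1 + γ.gp.parts ∧
      γt.gm.parts = γ.gm.parts ∧
      γt.ht = (m + n - l) + 1 ∧
      IsAncestor m n 0 (((m + n - l) - γ.ht) + 1) γ γt ∧
      IsAncestorC m n 0 (((m + n - l) - γ.ht) + 1) γ γt := by
  obtain ⟨d', γ', hγ', hexcl⟩ := hanc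
  have hk : ((m + n - l) - γ.ht) + 1 ≤ γ.k := by
    have := hγ'.ht_add_k_le
    omega
  obtain ⟨γt, hkt, hgp, hgm, hC⟩ := γ.exists_isAncestorC_replicate _ hk
  refine ⟨hk, γt, hkt, hgp, hgm, ?_, hC.isAncestor, hC⟩
  simp only [BRT.ht, hgp, hgm, Multiset.card_add, Multiset.card_replicate] at hg ⊢
  omega

/-- Existence of the first red ancestor: for `l ≥ 2`, `N = m + n - l`, if `γ` is a Brauer
representation triple for `(m,n)` with `ht(γ) ≤ N` possessing an `N`-excluded ancestor at
some depth, and `t = N - ht(γ)`, then `k ≥ t + 1` and the triple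
`(k - t - 1, γ₊ ∪ 1^{t+1}, γ₋)` is an `N`-excluded ancestor of `γ` at depth `t + 1` of
height `N + 1`, reached from `γ` by a chain of `t + 1` parent moves each adjoining one
part equal to `1` to the first component partition. -/
theorem stmt10 (m n l : ℕ) (hl : 2 ≤ l) (γ : BRT m (n - 0))
    (hg : γ.ht ≤ m + n - l)
    (hanc : ∃ d' : ℕ, ∃ γ' : BRT m (n - d'),
      IsAncestor m n 0 d' γ γ' ∧ m + n - l < γ'.ht) :
    ((m + n - l) - γ.ht) + 1 ≤ γ.k ∧
    ∃ γt : BRT m (n - (((m + n - l) - γ.ht) + 1)),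
      γt.k = γ.k - (((m + n - l) - γ.ht) + 1) ∧
      γt.gp.parts = Multiset.replicate (((m + n - l) - γ.ht) + 1) 1 + γ.gp.parts ∧
      γt.gm.parts = γ.gm.parts ∧
      γt.ht = (m + n - l) + 1 ∧
      IsAncestor m n 0 (((m + n - l) - γ.ht) + 1) γ γt ∧
      IsAncestorC m n 0 (((m + n - l) - γ.ht) + 1) γ γt :=
  stmt10_general m n l γ hg hanc
end

section
/- (Surjectivity of the first-ancestor map.) Let l ≥ 2, let m, n ≥ 2l − 3, set N = m + n − l, and let 1 ≤ d ≤ l − 1. Let γ = (k, γ₊, γ₋) be a Brauer representation triple for the pair (m, n−d) with ht(γ) = N + 1. Then γ₊ has at least d parts equal to 1, and the triple g = (k + d, g₊, γ₋), where g₊ is γ₊ with d parts equal to 1 removed, is a Brauer representation triple for the pair (m,n) with ht(g) = N + 1 − d ≤ N, and γ is an ancestor of g at depth d. -/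
/-! A part of a partition contributes at least two boxes unless it equals `1`, so
`2 · #parts ≤ size + #(parts equal to 1)`. Applied to `γ₊` and `γ₋`, the height condition
`ht γ = N + 1` together with `m ≥ 2l - 3` forces `γ₊` to contain at least `d` parts `1`.
Erasing them and raising `k` by `d` gives `g`; putting the parts `1` back one at a time while
lowering `k` is a chain of `d` parent steps of type (b) from `g` to `γ`. -/

theorem Nat.Partition.two_mul_card_parts_le {n : ℕ} (p : n.Partition) :
    2 * Multiset.card p.parts ≤ n + p.parts.count 1 := by
  suffices ∀ s : Multiset ℕ, (∀ x ∈ s, 0 < x) → 2 * Multiset.card s ≤ s.sum + s.count 1 by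
    simpa [p.parts_sum] using this p.parts fun _ hx => p.parts_pos hx
  intro s
  induction s using Multiset.induction with
  | empty => simp
  | cons a s ih =>
    intro hs
    have ha := hs a (Multiset.mem_cons_self a s)
    have := ih fun x hx => hs x (Multiset.mem_cons_of_mem hx)
    rcases eq_or_ne a 1 with rfl | h
    · simp only [Multiset.card_cons, Multiset.sum_cons, Multiset.count_cons_self]
      omega
    · simp only [Multiset.card_cons, Multiset.sum_cons, Multiset.count_cons_of_ne (Ne.symm h)]
      omega

theorem isParent_of_gp_eq_cons_one {m n₁ n₂ : ℕ} {γ : BRT m n₁} {γ' : BRT m n₂}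
    (hk : γ'.k = γ.k - 1) (hgm : γ'.gm.parts = γ.gm.parts)
    (hgp : γ'.gp.parts = 1 ::ₘ γ.gp.parts) : IsParent γ γ' :=
  Or.inr ⟨hk, hgm, Or.inl hgp⟩

namespace BRT

section Ones

variable {m n : ℕ}

theorem ext_parts {γ γ' : BRT m n} (hk : γ.k = γ'.k)
    (hgp : γ.gp.parts = γ'.gp.parts) (hgm : γ.gm.parts = γ'.gm.parts) : γ = γ' := by
  obtain ⟨k, _, gp, gm⟩ := γ
  obtain ⟨k', _, gp', gm'⟩ := γ'
  obtain rfl : k = k' := hk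
  obtain rfl := Nat.Partition.ext hgp
  obtain rfl := Nat.Partition.ext hgm
  rfl

/-- The ancestor of `g` at depth `i` reached by `i` parent steps of type (b), each adding a
part `1` to `γ₊`. -/
def withOnes (g : BRT m n) (i : ℕ) (hi : i ≤ g.k) : BRT m (n - i) where
  k := g.k - i
  k_le := by have := g.k_le; omega
  gp := ⟨Multiset.replicate i 1 + g.gp.parts, by
    simp only [Multiset.mem_add, Multiset.mem_replicate]
    rintro x (⟨-, rfl⟩ | hx)
    exacts [Nat.one_pos, g.gp.parts_pos hx], by
    have := g.k_le
    simp only [Multiset.sum_add, Multiset.sum_replicate, smul_eq_mul, mul_one, g.gp.parts_sum]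
    omega⟩
  gm := ⟨g.gm.parts, fun hx => g.gm.parts_pos hx, by
    have := g.k_le
    rw [g.gm.parts_sum]
    omega⟩

theorem ht_withOnes (g : BRT m n) (i : ℕ) (hi : i ≤ g.k) : (g.withOnes i hi).ht = g.ht + i := by
  simp only [ht, withOnes, Multiset.card_add, Multiset.card_replicate]
  omega

theorem isAncestor_withOnes (g : BRT m n) (i : ℕ) (hi : i ≤ g.k) (hi0 : 1 ≤ i) :
    IsAncestor m n 0 i g (g.withOnes i hi) := by
  induction i, hi0 using Nat.le_induction with
  | base =>
    exact .step g (g.withOnes 1 hi) (isParent_of_gp_eq_cons_one rfl rfl (by simp [withOnes]))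
  | succ i _ ih =>
    refine .tail (g.withOnes (i + 1) hi) (ih (by omega)) (isParent_of_gp_eq_cons_one ?_ rfl ?_)
    · simp only [withOnes]
      omega
    · simp [withOnes, Multiset.replicate_succ]

def eraseOnes {d : ℕ} (γ : BRT m (n - d)) (hd : d ≤ γ.gp.parts.count 1) (hdn : d ≤ n) :
    BRT m n where
  k := γ.k + d
  k_le := by
    have := γ.k_le
    have := γ.gp.two_mul_card_parts_le
    have := Multiset.count_le_card 1 γ.gp.parts
    omega
  gp := ⟨γ.gp.parts - Multiset.replicate d 1,
    fun hx => γ.gp.parts_pos (Multiset.mem_of_le tsub_le_self hx), by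
    have hsum := congrArg Multiset.sum
      (add_tsub_cancel_of_le (Multiset.le_count_iff_replicate_le.1 hd))
    rw [Multiset.sum_add, Multiset.sum_replicate, smul_eq_mul, mul_one, γ.gp.parts_sum] at hsum
    omega⟩
  gm := ⟨γ.gm.parts, fun hx => γ.gm.parts_pos hx, by
    have := γ.k_le
    rw [γ.gm.parts_sum]
    omega⟩

variable {d : ℕ} (γ : BRT m (n - d)) (hd : d ≤ γ.gp.parts.count 1) (hdn : d ≤ n)

theorem replicate_add_eraseOnes_gp :
    Multiset.replicate d 1 + (γ.eraseOnes hd hdn).gp.parts = γ.gp.parts :=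
  add_tsub_cancel_of_le (Multiset.le_count_iff_replicate_le.1 hd)

theorem withOnes_eraseOnes : (γ.eraseOnes hd hdn).withOnes d le_add_self = γ :=
  ext_parts (Nat.add_sub_cancel _ _) (γ.replicate_add_eraseOnes_gp hd hdn) rfl

end Ones

section Height

variable {m n l d : ℕ} (γ : BRT m (n - d))

theorem depth_le_of_ht_eq (hn : 2 * l - 3 ≤ n) (hd : d ≤ l - 1) (hht : γ.ht = m + n - l + 1) :
    d ≤ n := by
  have := γ.gp.two_mul_card_parts_le
  have := γ.gm.two_mul_card_parts_le
  have := Multiset.count_le_card 1 γ.gm.parts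
  have := Multiset.count_le_card 1 γ.gp.parts
  have := γ.k_le
  rw [ht] at hht
  omega

theorem le_count_one_of_ht_eq (hm : 2 * l - 3 ≤ m) (hn : 2 * l - 3 ≤ n) (hd : d ≤ l - 1)
    (hht : γ.ht = m + n - l + 1) : d ≤ γ.gp.parts.count 1 := by
  have := γ.gp.two_mul_card_parts_le
  have := γ.gm.two_mul_card_parts_le
  have := Multiset.count_le_card 1 γ.gm.parts
  have := γ.k_le
  rw [ht] at hht
  omega

end Height

end BRT

theorem stmt12_general (m n l d : ℕ) (hm : 2 * l - 3 ≤ m) (hn : 2 * l - 3 ≤ n)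
    (hd1 : 1 ≤ d) (hd2 : d ≤ l - 1)
    (γ : BRT m (n - d)) (hht : γ.ht = (m + n - l) + 1) :
    d ≤ Multiset.count 1 γ.gp.parts ∧
    ∃ g : BRT m (n - 0),
      g.k = γ.k + d ∧
      Multiset.replicate d 1 + g.gp.parts = γ.gp.parts ∧
      g.gm.parts = γ.gm.parts ∧
      g.ht = (m + n - l) + 1 - d ∧
      g.ht ≤ m + n - l ∧
      IsAncestor m n 0 d g γ := by
  have hd := γ.le_count_one_of_ht_eq hm hn hd2 hht
  have hdn := γ.depth_le_of_ht_eq hn hd2 hht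
  have hγ := γ.withOnes_eraseOnes hd hdn
  have hht' := (γ.eraseOnes hd hdn).ht_withOnes d le_add_self
  rw [hγ] at hht'
  have hanc := (γ.eraseOnes hd hdn).isAncestor_withOnes d le_add_self hd1
  rw [hγ] at hanc
  exact ⟨hd, γ.eraseOnes hd hdn, rfl, γ.replicate_add_eraseOnes_gp hd hdn, rfl,
    by omega, by omega, hanc⟩

/-- Surjectivity of the first-ancestor map: for `l ≥ 2`, `m, n ≥ 2l - 3`,
`N = m + n - l`, `1 ≤ d ≤ l - 1`, if `γ = (k, γ₊, γ₋)` is a Brauer representation triple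
for the pair `(m, n - d)` with `ht(γ) = N + 1`, then `γ₊` has at least `d` parts equal
to `1`, and the triple `g = (k + d, γ₊ minus d parts equal to 1, γ₋)` is a triple for the
pair `(m, n)` with `ht(g) = N + 1 - d ≤ N` of which `γ` is an ancestor at depth `d`. -/
theorem stmt12 (m n l d : ℕ) (hl : 2 ≤ l) (hm : 2 * l - 3 ≤ m) (hn : 2 * l - 3 ≤ n)
    (hd1 : 1 ≤ d) (hd2 : d ≤ l - 1)
    (γ : BRT m (n - d)) (hht : γ.ht = (m + n - l) + 1) :
    d ≤ Multiset.count 1 γ.gp.parts ∧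
    ∃ g : BRT m (n - 0),
      g.k = γ.k + d ∧
      Multiset.replicate d 1 + g.gp.parts = γ.gp.parts ∧
      g.gm.parts = γ.gm.parts ∧
      g.ht = (m + n - l) + 1 - d ∧
      g.ht ≤ m + n - l ∧
      IsAncestor m n 0 d g γ :=
  stmt12_general m n l d hm hn hd1 hd2 γ hht
end

section
/- Let m ≥ 2l − 3 and let (k, γ₊, γ₋) be a Brauer representation triple for the pair (m, n−d) with ht = (m + n − l) + Δ for some Δ ≥ 1. Then c₁(γ₊) ≥ (|γ₊| − c₁(γ₊)) + 2d + 2k + 2Δ − 3, where c₁(γ₊) is the number of parts of γ₊ and |γ₊| its number of boxes. -/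
/-!
Since every part of `γ₋` is positive, `c₁(γ₋) ≤ |γ₋| = n - d - k`, so the height forces
`c₁(γ₊) ≥ ht(γ) - (n - d - k)`; together with `|γ₊| = m - k` and `m ≥ 2l - 3` the claim is then
linear arithmetic.
-/

theorem Nat.Partition.card_parts_le_s13 {n : ℕ} (μ : n.Partition) : Multiset.card μ.parts ≤ n := by
  simpa [μ.parts_sum] using Multiset.card_nsmul_le_sum fun _ hx => μ.parts_pos hx

theorem BRT.ht_le_card_gp_add {m n : ℕ} (γ : BRT m n) :
    γ.ht ≤ Multiset.card γ.gp.parts + (n - γ.k) :=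
  Nat.add_le_add_left γ.gm.card_parts_le_s13 _

theorem stmt13_general (m n l d Δ : ℕ) (hm : 2 * l - 3 ≤ m) (hd : d ≤ n)
    (γ : BRT m (n - d)) (hht : γ.ht = (m + n - l) + Δ) :
    ((γ.gp.parts.sum : ℤ) - Multiset.card γ.gp.parts)
        + 2 * d + 2 * γ.k + 2 * Δ - 3
      ≤ (Multiset.card γ.gp.parts : ℤ) := by
  have hsum : γ.gp.parts.sum = m - γ.k := γ.gp.parts_sum
  have hk := γ.k_le
  have hht_le := γ.ht_le_card_gp_add
  omega

/-- For `m ≥ 2l - 3`, if `(k, γ₊, γ₋)` is a Brauer representation triple for the pair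
`(m, n - d)` of height `(m + n - l) + Δ` with `Δ ≥ 1`, then
`c₁(γ₊) ≥ (|γ₊| - c₁(γ₊)) + 2d + 2k + 2Δ - 3` (as integers). -/
theorem stmt13 (m n l d Δ : ℕ) (hm : 2 * l - 3 ≤ m) (hd : d ≤ n) (hΔ : 1 ≤ Δ)
    (γ : BRT m (n - d)) (hht : γ.ht = (m + n - l) + Δ) :
    ((γ.gp.parts.sum : ℤ) - Multiset.card γ.gp.parts)
        + 2 * d + 2 * γ.k + 2 * Δ - 3
      ≤ (Multiset.card γ.gp.parts : ℤ) :=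
  stmt13_general m n l d Δ hm hd γ hht
end
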